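/- Let G be a tournament on n vertices and S an FVS of G with |S| < 2n/3. Then there exist at least ⌈n/9⌉ vertices v ∉ S such that both |N⁺(v)| ≤ 8n/9 and |N⁻(v)| ≤ 8n/9. -/

import Mathlib

/-!
Deleting the feedback vertex set `S` from the tournament leaves a transitive tournament on
`A = V \ S`, so the in-degrees inside `A` are exactly `0, 1, …, |A| - 1`. A vertex of
`A` with in-degree `i` inside `A` has in-degree at most `|S| + i` and out-degree at most
`n - 1 - i` in the whole tournament; since `|S| < 2n/3`, at least `⌈n/9⌉` values of `i`
make both bounds at most `8n/9`.
-/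

open Finset

variable {V : Type*}

/-- A digraph (given by its arc relation) is acyclic if no vertex lies on a directed cycle. -/
def Acyclic (E : V → V → Prop) : Prop := ∀ v, ¬ Relation.TransGen E v v

/-- The digraph obtained by deleting the vertex set `X`. -/
def Delete [DecidableEq V] (E : V → V → Prop) (X : Finset V) : V → V → Prop :=
  fun a b => a ∉ X ∧ b ∉ X ∧ E a b

/-- The subgraph induced on the vertex set `A`. -/
def Induce [DecidableEq V] (E : V → V → Prop) (A : Finset V) : V → V → Prop :=
  fun a b => a ∈ A ∧ b ∈ A ∧ E a b

/-- `S` is a feedback vertex set of the digraph `E`. -/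
def IsFVS [DecidableEq V] (E : V → V → Prop) (S : Finset V) : Prop :=
  Acyclic (Delete E S)

/-- A tournament: no self-loops and exactly one arc between any two distinct vertices. -/
def IsTournament (E : V → V → Prop) : Prop :=
  (∀ v, ¬ E v v) ∧ ∀ u v, u ≠ v → (E u v ↔ ¬ E v u)

/-- Weight of a vertex set. -/
def weight (w : V → ℕ) (S : Finset V) : ℕ := ∑ v ∈ S, w v

/-- Out-neighborhood. -/
def Nout [Fintype V] [DecidableEq V] (E : V → V → Prop) [DecidableRel E] (p : V) : Finset V :=
  Finset.univ.filter (fun u => E p u)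

/-- In-neighborhood. -/
def Nin [Fintype V] [DecidableEq V] (E : V → V → Prop) [DecidableRel E] (p : V) : Finset V :=
  Finset.univ.filter (fun u => E u p)

/-- `S` is a minimum-weight FVS of `(E, w)`. -/
def IsOptFVS [DecidableEq V] (E : V → V → Prop) (w : V → ℕ) (S : Finset V) : Prop :=
  IsFVS E S ∧ ∀ S', IsFVS E S' → weight w S ≤ weight w S'

/-- `S` is a `p`-disjoint FVS of `E`. -/
def IsPDisjFVS [DecidableEq V] (E : V → V → Prop) (p : V) (S : Finset V) : Prop :=
  IsFVS E S ∧ p ∉ S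

/-- `S` is a minimum-weight `p`-disjoint FVS of `(E, w)`. -/
def IsOptPDisjFVS [DecidableEq V] (E : V → V → Prop) (w : V → ℕ) (p : V) (S : Finset V) : Prop :=
  IsPDisjFVS E p S ∧ ∀ S', IsPDisjFVS E p S' → weight w S ≤ weight w S'

/-- `S` is a 2-approximate solution of `(E, w)`. -/
def TwoApproxFVS [DecidableEq V] (E : V → V → Prop) (w : V → ℕ) (S : Finset V) : Prop :=
  IsFVS E S ∧ ∀ S', IsOptFVS E w S' → weight w S ≤ 2 * weight w S'

/-- `S` is a 2-approximate `p`-disjoint solution of `(E, w)`. -/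
def TwoApproxPDisj [DecidableEq V] (E : V → V → Prop) (w : V → ℕ) (p : V) (S : Finset V) : Prop :=
  IsPDisjFVS E p S ∧ ∀ S', IsOptPDisjFVS E w p S' → weight w S ≤ 2 * weight w S'

/-- `l` is a topological sort of the subgraph of `E` induced on the vertex set `A`. -/
def IsTopoOn [DecidableEq V] (E : V → V → Prop) (A : Finset V) (l : List V) : Prop :=
  l.Nodup ∧ (∀ v, v ∈ l ↔ v ∈ A) ∧
    ∀ (i j : ℕ) (hi : i < l.length) (hj : j < l.length),
      E (l.get ⟨i, hi⟩) (l.get ⟨j, hj⟩) → i < j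

namespace IsTournament

variable {E : V → V → Prop}

theorem irrefl (hT : IsTournament E) (v : V) : ¬ E v v := hT.1 v

theorem not_rel_of_rel (hT : IsTournament E) {u v : V} (h : E u v) : ¬ E v u :=
  (hT.2 u v fun huv => hT.irrefl u (huv ▸ h)).mp h

theorem rel_of_not_rel (hT : IsTournament E) {u v : V} (hne : u ≠ v) (h : ¬ E u v) : E v u := by
  by_contra h'
  exact h ((hT.2 u v hne).mpr h')

theorem rel_trans_of_isFVS [DecidableEq V] (hT : IsTournament E) {S : Finset V}
    (hS : IsFVS E S) {u v w : V} (hu : u ∉ S) (hv : v ∉ S) (hw : w ∉ S)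
    (huv : E u v) (hvw : E v w) : E u w := by
  by_contra huw
  by_cases hwu : w = u
  · subst hwu
    exact hT.not_rel_of_rel huv hvw
  · exact hS u (.head ⟨hu, hv, huv⟩ (.head ⟨hv, hw, hvw⟩
      (.single ⟨hw, hu, hT.rel_of_not_rel (Ne.symm hwu) huw⟩)))

end IsTournament

def indegWithin (E : V → V → Prop) [DecidableRel E] (A : Finset V) (v : V) : ℕ :=
  (A.filter (E · v)).card

section Transitive

variable {E : V → V → Prop} [DecidableRel E] {A : Finset V}

theorem indegWithin_lt_card (hirr : ∀ v, ¬ E v v) {v : V} (hv : v ∈ A) :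
    indegWithin E A v < A.card :=
  card_lt_card ⟨filter_subset _ _, fun h => hirr v (mem_filter.mp (h hv)).2⟩

theorem indegWithin_lt_of_rel (hirr : ∀ v, ¬ E v v)
    (htrans : ∀ u ∈ A, ∀ v ∈ A, ∀ w ∈ A, E u v → E v w → E u w)
    {u v : V} (hu : u ∈ A) (hv : v ∈ A) (huv : E u v) :
    indegWithin E A u < indegWithin E A v := by
  refine card_lt_card ⟨fun w hw => ?_, fun h => hirr u (mem_filter.mp (h ?_)).2⟩
  · obtain ⟨hwA, hwu⟩ := mem_filter.mp hw
    exact mem_filter.mpr ⟨hwA, htrans w hwA u hu v hv hwu huv⟩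
  · exact mem_filter.mpr ⟨hu, huv⟩

theorem IsTournament.injOn_indegWithin (hT : IsTournament E)
    (htrans : ∀ u ∈ A, ∀ v ∈ A, ∀ w ∈ A, E u v → E v w → E u w) :
    Set.InjOn (indegWithin E A) A := by
  intro u hu v hv h
  by_contra hne
  by_cases huv : E u v
  · exact (indegWithin_lt_of_rel hT.irrefl htrans hu hv huv).ne h
  · exact (indegWithin_lt_of_rel hT.irrefl htrans hv hu (hT.rel_of_not_rel hne huv)).ne' h

theorem IsTournament.image_indegWithin [DecidableEq V] (hT : IsTournament E)
    (htrans : ∀ u ∈ A, ∀ v ∈ A, ∀ w ∈ A, E u v → E v w → E u w) :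
    A.image (indegWithin E A) = range A.card := by
  refine eq_of_subset_of_card_le (fun i hi => ?_) ?_
  · obtain ⟨v, hv, rfl⟩ := mem_image.mp hi
    exact mem_range.mpr (indegWithin_lt_card hT.irrefl hv)
  · rw [card_range, card_image_of_injOn (hT.injOn_indegWithin htrans)]

theorem IsTournament.card_filter_indegWithin [DecidableEq V] (hT : IsTournament E)
    (htrans : ∀ u ∈ A, ∀ v ∈ A, ∀ w ∈ A, E u v → E v w → E u w)
    (p : ℕ → Prop) [DecidablePred p] :
    (A.filter fun v => p (indegWithin E A v)).card = ((range A.card).filter p).card := by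
  rw [← hT.image_indegWithin htrans, filter_image,
    card_image_of_injOn ((hT.injOn_indegWithin htrans).mono (filter_subset _ _))]

end Transitive

section Degrees

variable [Fintype V] [DecidableEq V] {E : V → V → Prop} [DecidableRel E]

theorem indegWithin_le_card_Nin (A : Finset V) (v : V) :
    indegWithin E A v ≤ (Nin E v).card :=
  card_le_card fun u hu => by simpa [Nin] using (mem_filter.mp hu).2

theorem card_Nin_le_card_add_indegWithin (S : Finset V) (v : V) :
    (Nin E v).card ≤ S.card + indegWithin E (univ \ S) v := by
  refine (card_le_card fun u hu => ?_).trans (card_union_le S _)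
  by_cases huS : u ∈ S
  · exact mem_union_left _ huS
  · exact mem_union_right _ (mem_filter.mpr ⟨by simpa using huS, (mem_filter.mp hu).2⟩)

theorem IsTournament.card_Nout_add_card_Nin_lt (hT : IsTournament E) (v : V) :
    (Nout E v).card + (Nin E v).card < Fintype.card V := by
  have hdisj : Disjoint (Nout E v) (Nin E v) := disjoint_left.mpr fun u hout hin =>
    hT.not_rel_of_rel (mem_filter.mp hout).2 (mem_filter.mp hin).2
  have hv : v ∉ Nout E v ∪ Nin E v := by simp [Nout, Nin, hT.irrefl v]
  rw [← card_union_of_disjoint hdisj, ← card_univ]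
  exact card_lt_card ⟨subset_univ _, fun h => hv (h (mem_univ v))⟩

end Degrees

-- The witnesses are the `⌈n/9⌉` consecutive values starting at `⌊(n-1)/9⌋`.
theorem le_card_filter_range_of_three_mul_lt {n m s : ℕ} (hmn : m + s = n) (hs : 3 * s < 2 * n) :
    (n + 8) / 9 ≤
      ((range m).filter fun i => n ≤ 9 * i + 9 ∧ 9 * (s + i) ≤ 8 * n).card := by
  calc (n + 8) / 9 = (Ico ((n - 1) / 9) ((n - 1) / 9 + (n + 8) / 9)).card := by simp
    _ ≤ _ := card_le_card fun i hi => by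
      simp only [mem_Ico] at hi
      simp only [mem_filter, mem_range]
      omega

theorem stmt11 [Fintype V] [DecidableEq V] (E : V → V → Prop) [DecidableRel E]
    (hT : IsTournament E) (S : Finset V) (hS : IsFVS E S)
    (hsmall : 3 * S.card < 2 * Fintype.card V) :
    (Fintype.card V + 8) / 9 ≤
      ((Finset.univ \ S).filter (fun v =>
        9 * (Nout E v).card ≤ 8 * Fintype.card V ∧
          9 * (Nin E v).card ≤ 8 * Fintype.card V)).card := by
  set n := Fintype.card V
  set A := univ \ S
  have htrans : ∀ u ∈ A, ∀ v ∈ A, ∀ w ∈ A, E u v → E v w → E u w := fun u hu v hv w hw =>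
    hT.rel_trans_of_isFVS hS (mem_sdiff.mp hu).2 (mem_sdiff.mp hv).2 (mem_sdiff.mp hw).2
  have hgood : (A.filter fun v => n ≤ 9 * indegWithin E A v + 9 ∧
      9 * (S.card + indegWithin E A v) ≤ 8 * n) ⊆
      A.filter fun v => 9 * (Nout E v).card ≤ 8 * n ∧ 9 * (Nin E v).card ≤ 8 * n := by
    intro v hv
    obtain ⟨hvA, hout, hin⟩ := mem_filter.mp hv
    have hdeg := hT.card_Nout_add_card_Nin_lt v
    have hNin_ge : indegWithin E A v ≤ (Nin E v).card := indegWithin_le_card_Nin A v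
    have hNin_le : (Nin E v).card ≤ S.card + indegWithin E A v :=
      card_Nin_le_card_add_indegWithin S v
    exact mem_filter.mpr ⟨hvA, by omega, by omega⟩
  calc (n + 8) / 9
      ≤ ((range A.card).filter fun i => n ≤ 9 * i + 9 ∧ 9 * (S.card + i) ≤ 8 * n).card :=
        le_card_filter_range_of_three_mul_lt (card_sdiff_add_card_eq_card (subset_univ S)) hsmall
    _ = _ := (hT.card_filter_indegWithin htrans _).symm
    _ ≤ _ := card_le_card hgood
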